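/- arXiv:1008.1455 — 3 statements merged into one kernel-verified Lean document; each statement's English description precedes it below -/
import Mathlib

section
/- Let p be a positive integer, let c_1 > c_2 > … > c_p > 0 be real numbers, and let 0 ≤ a ≤ p. For any x = (x_1, …, x_p) with each x_i ∈ [0, 1] and Σ_{i=1}^p x_i = a, one has Σ_{i=1}^p c_i x_i ≤ Σ_{i=1}^p c_i x̂_i, where x̂_i = min(1, max(0, a - i + 1)). -/
/-!
Write `x̂` for the water-filling vector. Its prefix sums are `min k a`, the largest values any
`x ∈ [0,1]^p` with total `a` can reach, so `x̂ - x` has nonnegative prefix sums and total `0`.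
Abel summation against the decreasing weights `c` then gives `∑ c i (x̂ i - x i) ≥ 0`.
-/

open Finset

/-- The paper's `x̂`: mass `a` poured greedily into unit-capacity slots `1, 2, 3, …`. -/
def waterFill (a : ℝ) (i : ℕ) : ℝ := min 1 (max 0 (a - i + 1))

theorem mul_sum_le_sum_mul_of_prefix_nonneg (c d : ℕ → ℝ) (n : ℕ)
    (hc : AntitoneOn c (Set.Icc 1 n)) (hd : ∀ k ≤ n, 0 ≤ ∑ i ∈ Icc 1 k, d i) :
    c n * ∑ i ∈ Icc 1 n, d i ≤ ∑ i ∈ Icc 1 n, c i * d i := by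
  induction n with
  | zero => simp
  | succ n ih =>
    have ih := ih (hc.mono (Set.Icc_subset_Icc_right n.le_succ)) fun k hk => hd k (by omega)
    have hstep : c (n + 1) * ∑ i ∈ Icc 1 n, d i ≤ c n * ∑ i ∈ Icc 1 n, d i := by
      rcases n.eq_zero_or_pos with rfl | hn
      · simp
      · exact mul_le_mul_of_nonneg_right
          (hc ⟨hn, by omega⟩ ⟨by omega, le_rfl⟩ n.le_succ) (hd n n.le_succ)
    rw [sum_Icc_succ_top (by omega), sum_Icc_succ_top (by omega)]
    linarith

theorem sum_mul_le_sum_mul_of_prefix_le (c x y : ℕ → ℝ) (n : ℕ)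
    (hc : AntitoneOn c (Set.Icc 1 n))
    (hprefix : ∀ k ≤ n, ∑ i ∈ Icc 1 k, x i ≤ ∑ i ∈ Icc 1 k, y i)
    (htotal : ∑ i ∈ Icc 1 n, x i = ∑ i ∈ Icc 1 n, y i) :
    ∑ i ∈ Icc 1 n, c i * x i ≤ ∑ i ∈ Icc 1 n, c i * y i := by
  have h := mul_sum_le_sum_mul_of_prefix_nonneg c (fun i => y i - x i) n hc fun k hk => by
    simpa only [sum_sub_distrib, sub_nonneg] using hprefix k hk
  simp only [sum_sub_distrib, htotal, sub_self, mul_zero, mul_sub] at h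
  linarith

theorem sum_waterFill (a : ℝ) (ha : 0 ≤ a) (k : ℕ) :
    ∑ i ∈ Icc 1 k, waterFill a i = min (k : ℝ) a := by
  induction k with
  | zero => simp [ha]
  | succ k ih =>
    rw [sum_Icc_succ_top (by omega), ih, waterFill]
    push_cast
    rcases le_total a k with h | h
    · rw [min_eq_right h, max_eq_left (by linarith), min_eq_right zero_le_one,
        min_eq_right (by linarith), add_zero]
    · rw [min_eq_left h, max_eq_right (by linarith)]
      rcases le_total a (k + 1) with h' | h'
      · rw [min_eq_right (by linarith), min_eq_right h']
        ring
      · rw [min_eq_left (by linarith), min_eq_left h']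

theorem sum_Icc_le_min_of_mem_Icc (x : ℕ → ℝ) (n : ℕ)
    (hx : ∀ i ∈ Icc 1 n, x i ∈ Set.Icc (0 : ℝ) 1) {k : ℕ} (hk : k ≤ n) :
    ∑ i ∈ Icc 1 k, x i ≤ min (k : ℝ) (∑ i ∈ Icc 1 n, x i) := by
  have hsub : Icc 1 k ⊆ Icc 1 n := Icc_subset_Icc_right hk
  refine le_min ?_ (sum_le_sum_of_subset_of_nonneg hsub fun i hi _ => (hx i hi).1)
  simpa using sum_le_sum fun i hi => (hx i (hsub hi)).2

theorem stmt_4_general (p : ℕ) (c : ℕ → ℝ)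
    (hcdec : ∀ i j : ℕ, 1 ≤ i → i < j → j ≤ p → c j < c i)
    (a : ℝ) (ha0 : 0 ≤ a) (hap : a ≤ p)
    (x : ℕ → ℝ) (hx : ∀ i ∈ Finset.Icc 1 p, x i ∈ Set.Icc (0 : ℝ) 1)
    (hsum : ∑ i ∈ Finset.Icc 1 p, x i = a) :
    ∑ i ∈ Finset.Icc 1 p, c i * x i ≤
      ∑ i ∈ Finset.Icc 1 p, c i * min 1 (max 0 (a - (i : ℝ) + 1)) := by
  have hanti : AntitoneOn c (Set.Icc 1 p) := fun i hi j hj hij =>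
    hij.eq_or_lt.elim (fun h => h ▸ le_rfl) fun h => (hcdec i j hi.1 h hj.2).le
  refine sum_mul_le_sum_mul_of_prefix_le c x (waterFill a) p hanti (fun k hk => ?_) ?_
  · rw [sum_waterFill a ha0, ← hsum]
    exact sum_Icc_le_min_of_mem_Icc x p hx hk
  · rw [sum_waterFill a ha0, min_eq_right hap, hsum]

theorem stmt_4 (p : ℕ) (hp : 0 < p) (c : ℕ → ℝ)
    (hcpos : ∀ i ∈ Finset.Icc 1 p, 0 < c i)
    (hcdec : ∀ i j : ℕ, 1 ≤ i → i < j → j ≤ p → c j < c i)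
    (a : ℝ) (ha0 : 0 ≤ a) (hap : a ≤ p)
    (x : ℕ → ℝ) (hx : ∀ i ∈ Finset.Icc 1 p, x i ∈ Set.Icc (0 : ℝ) 1)
    (hsum : ∑ i ∈ Finset.Icc 1 p, x i = a) :
    ∑ i ∈ Finset.Icc 1 p, c i * x i ≤
      ∑ i ∈ Finset.Icc 1 p, c i * min 1 (max 0 (a - (i : ℝ) + 1)) :=
  stmt_4_general p c hcdec a ha0 hap x hx hsum
end

section
/- Let k ≥ 1 be an integer and 0 < r < 1. Define g(y) = k + y·(1 - (k+1)r)/r on the interval I = (r, min(r/(1-r), 1)]. Then the infimum of g over I equals: (k+1)(1 - r) if 0 < r ≤ 1/(k+1); 1 + k(1 - 2r)/(1 - r) if 1/(k+1) ≤ r ≤ 1/2; and (1 - r)/r if 1/2 ≤ r ≤ 1. -/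
/-!
The objective is affine in `y` with slope `(1 - (k+1) r) / r`. For `r ≤ 1/(k+1)` it is
nondecreasing, so its infimum over `(r, min (r/(1-r)) 1]` is the value at the open end `y = r`
(approached, not attained). Otherwise it is nonincreasing and the infimum is attained at the right
end, which is `r/(1-r)` for `r ≤ 1/2` and `1` for `r ≥ 1/2`.
-/

open Set

section ImageIoc

variable {α β : Type*} [ConditionallyCompleteLinearOrder α] [TopologicalSpace α] [OrderTopology α]
  [DenselyOrdered α] [ConditionallyCompleteLinearOrder β] [TopologicalSpace β]
  [OrderClosedTopology β] {f : α → β} {a b : α}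

theorem Monotone.csInf_image_Ioc (hf : Monotone f) (hfa : ContinuousAt f a) (hab : a < b) :
    sInf (f '' Ioc a b) = f a := by
  rw [← hf.map_csInf_of_continuousAt ((csInf_Ioc hab).symm ▸ hfa) (nonempty_Ioc.2 hab)
    bddBelow_Ioc, csInf_Ioc hab]

end ImageIoc

theorem Antitone.csInf_image_Ioc {α β : Type*} [Preorder α] [ConditionallyCompleteLattice β]
    {f : α → β} (hf : Antitone f) {a b : α} (hab : a < b) :
    sInf (f '' Ioc a b) = f b :=
  (hf.map_isGreatest (isGreatest_Ioc hab)).csInf_eq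

theorem monotone_add_mul_div_of_nonneg (k d r : ℝ) (hd : 0 ≤ d) (hr : 0 ≤ r) :
    Monotone fun y : ℝ => k + y * d / r := fun _ _ hxy => by dsimp only; gcongr

theorem antitone_add_mul_div_of_nonpos (k d r : ℝ) (hd : d ≤ 0) (hr : 0 ≤ r) :
    Antitone fun y : ℝ => k + y * d / r := fun _ _ hxy => by
  have := mul_le_mul_of_nonpos_right hxy hd
  dsimp only
  gcongr

theorem stmt_10 (k : ℕ) (hk : 1 ≤ k) (r : ℝ) (hr0 : 0 < r) (hr1 : r < 1) :
    (r ≤ 1 / ((k : ℝ) + 1) →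
      sInf ((fun y : ℝ => (k : ℝ) + y * (1 - ((k : ℝ) + 1) * r) / r) ''
        Set.Ioc r (min (r / (1 - r)) 1)) = ((k : ℝ) + 1) * (1 - r)) ∧
    (1 / ((k : ℝ) + 1) ≤ r → r ≤ 1 / 2 →
      sInf ((fun y : ℝ => (k : ℝ) + y * (1 - ((k : ℝ) + 1) * r) / r) ''
        Set.Ioc r (min (r / (1 - r)) 1)) = 1 + (k : ℝ) * (1 - 2 * r) / (1 - r)) ∧
    (1 / 2 ≤ r →
      sInf ((fun y : ℝ => (k : ℝ) + y * (1 - ((k : ℝ) + 1) * r) / r) ''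
        Set.Ioc r (min (r / (1 - r)) 1)) = (1 - r) / r) := by
  have h1r : 0 < 1 - r := by linarith
  have hk1 : (0 : ℝ) < k + 1 := by positivity
  have hr_lt : r < min (r / (1 - r)) 1 :=
    lt_min ((lt_div_iff₀ h1r).2 (by nlinarith)) hr1
  refine ⟨fun hsmall => ?_, fun hmid hhalf => ?_, fun hhalf => ?_⟩
  · have hslope : 0 ≤ 1 - ((k : ℝ) + 1) * r := by rw [le_div_iff₀ hk1] at hsmall; linarith
    rw [(monotone_add_mul_div_of_nonneg _ _ _ hslope hr0.le).csInf_image_Ioc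
      (by fun_prop) hr_lt]
    field_simp
    ring
  · have hslope : 1 - ((k : ℝ) + 1) * r ≤ 0 := by rw [div_le_iff₀ hk1] at hmid; linarith
    have hmin : min (r / (1 - r)) 1 = r / (1 - r) :=
      min_eq_left ((div_le_one h1r).2 (by linarith))
    rw [hmin, (antitone_add_mul_div_of_nonpos _ _ _ hslope hr0.le).csInf_image_Ioc (hmin ▸ hr_lt)]
    field_simp
    ring
  · have hslope : 1 - ((k : ℝ) + 1) * r ≤ 0 := by
      nlinarith [(by exact_mod_cast hk : (1 : ℝ) ≤ k)]
    have hmin : min (r / (1 - r)) 1 = 1 :=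
      min_eq_right ((le_div_iff₀ h1r).2 (by linarith))
    rw [hmin, (antitone_add_mul_div_of_nonpos _ _ _ hslope hr0.le).csInf_image_Ioc (hmin ▸ hr_lt)]
    field_simp
    ring
end

section
/- Let k ≥ 2 be an integer. Define d_DDF(r) = (k+1)(1-r) for 0 ≤ r ≤ 1/(k+1) and d_DDF(r) = 1 + k(1-2r)/(1-r) for 1/(k+1) ≤ r ≤ 1/2, and define d_SCF(r) = (k+1) - 2kr for 0 ≤ r ≤ 1/2. Then d_DDF(r) ≥ d_SCF(r) for all r ∈ [0, 1/2], with strict inequality for 0 < r < 1/2. -/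
/-! Below the corner point `r = 1/(k+1)` the gap `d_DDF - d_SCF` is `(k-1) r`, and above it the
gap is `k r (1-2r)/(1-r)`; both are nonnegative on `[0, 1/2]` and positive inside it once `k ≥ 2`. -/

noncomputable def ddfDMT (k r : ℝ) : ℝ :=
  if r ≤ 1 / (k + 1) then (k + 1) * (1 - r) else 1 + k * (1 - 2 * r) / (1 - r)

def scfDMT (k r : ℝ) : ℝ := (k + 1) - 2 * k * r

lemma ddfDMT_sub_scfDMT {k r : ℝ} (hr : r ≠ 1) :
    ddfDMT k r - scfDMT k r =
      if r ≤ 1 / (k + 1) then (k - 1) * r else k * r * (1 - 2 * r) / (1 - r) := by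
  have hr' : 1 - r ≠ 0 := sub_ne_zero.mpr hr.symm
  unfold ddfDMT scfDMT
  split_ifs
  · ring
  · field_simp
    ring

lemma scfDMT_le_ddfDMT {k r : ℝ} (hk : 1 ≤ k) (hr0 : 0 ≤ r) (hr2 : r ≤ 1 / 2) :
    scfDMT k r ≤ ddfDMT k r := by
  have hgap := ddfDMT_sub_scfDMT (k := k) (by linarith : r ≠ 1)
  have h1r : 0 < 1 - r := by linarith
  have h2r : 0 ≤ 1 - 2 * r := by linarith
  split_ifs at hgap
  · nlinarith
  · have : 0 ≤ k * r * (1 - 2 * r) / (1 - r) := by positivity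
    linarith

lemma scfDMT_lt_ddfDMT {k r : ℝ} (hk : 1 < k) (hr0 : 0 < r) (hr2 : r < 1 / 2) :
    scfDMT k r < ddfDMT k r := by
  have hgap := ddfDMT_sub_scfDMT (k := k) (by linarith : r ≠ 1)
  have h1r : 0 < 1 - r := by linarith
  have h2r : 0 < 1 - 2 * r := by linarith
  split_ifs at hgap
  · nlinarith
  · have : 0 < k * r * (1 - 2 * r) / (1 - r) := by
      have : 0 < k := by linarith
      positivity
    linarith

theorem stmt_13 (k : ℕ) (hk : 2 ≤ k) (r : ℝ) (hr0 : 0 ≤ r) (hr2 : r ≤ 1 / 2) :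
    (if r ≤ 1 / ((k : ℝ) + 1) then ((k : ℝ) + 1) * (1 - r)
      else 1 + (k : ℝ) * (1 - 2 * r) / (1 - r)) ≥ ((k : ℝ) + 1) - 2 * (k : ℝ) * r ∧
    (0 < r → r < 1 / 2 →
      (if r ≤ 1 / ((k : ℝ) + 1) then ((k : ℝ) + 1) * (1 - r)
        else 1 + (k : ℝ) * (1 - 2 * r) / (1 - r)) > ((k : ℝ) + 1) - 2 * (k : ℝ) * r) := by
  have hk' : (2 : ℝ) ≤ k := by exact_mod_cast hk
  exact ⟨scfDMT_le_ddfDMT (by linarith) hr0 hr2,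
    fun hr hr' => scfDMT_lt_ddfDMT (by linarith) hr hr'⟩
end
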